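/- arXiv:1510.03502 — 5 statements merged into one kernel-verified Lean document; each statement's English description precedes it below -/
import Mathlib

section
/- Let M range over all multisets of m Latin Hypercube d-trials on [n]. The expected number of d-tuples in [n]^d that belong to every trial of a uniformly random such multiset M equals n^d · binomial(((n-1)!)^(d-1)+m-1, m) / binomial((n!)^(d-1)+m-1, m). -/
/-!
Fix a coordinate `z`. Since the `z`-projection of a trial is a permutation, a trial has exactly
one point with `z`-coordinate `k` for every `k`, and reading off the other coordinates of these
points gives a family of `d - 1` permutations `σ i` of `[n]`; this is a bijection. Hence there are
`(n!)^(d-1)` trials, and those containing a fixed point `a` are the families with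
`σ i (a z) = a i`, of which there are `((n-1)!)^(d-1)`. Exchanging the two summations,
`∑_M c(M)` counts, for each of the `n^d` points `a`, the size-`m` multisets of trials
through `a`, and there are `binomial(((n-1)!)^(d-1)+m-1, m)` of these.
-/

/-- A Latin Hypercube `d`-trial on `[n]`: a multiset of `n` points of `[n]^d`
(encoded as `Sym (Fin d → Fin n) n`) whose projection onto each coordinate is
a permutation of `[n]`, i.e. equals the multiset `{1,…,n}`. -/
def IsLHTrial {n d : ℕ} (H : Sym (Fin d → Fin n) n) : Prop :=
  ∀ i : Fin d, (H : Multiset (Fin d → Fin n)).map (fun r => r i)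
    = (Finset.univ : Finset (Fin n)).val

instance {n d : ℕ} : DecidablePred (IsLHTrial (n := n) (d := d)) := fun H => by
  unfold IsLHTrial; infer_instance

/-- The finset of all Latin Hypercube `d`-trials on `[n]`. -/
def LHTrial (n d : ℕ) : Finset (Sym (Fin d → Fin n) n) :=
  Finset.univ.filter IsLHTrial

/-- The type of Latin Hypercube `d`-trials on `[n]`. -/
abbrev LHT (n d : ℕ) := {H : Sym (Fin d → Fin n) n // IsLHTrial H}

open Finset

theorem Equiv.Perm.card_subtype_apply_eq {α : Type*} [Fintype α] [DecidableEq α] (x y : α) :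
    Fintype.card {π : Equiv.Perm α // π x = y} = (Fintype.card α - 1).factorial := by
  have hfiber (y' : α) : Fintype.card {π : Equiv.Perm α // π x = y'}
      = Fintype.card {π : Equiv.Perm α // π x = y} :=
    Fintype.card_congr <| (Equiv.mulLeft (Equiv.swap y y')).subtypeEquiv fun π => by
      simp [Equiv.swap_apply_eq_iff]
  have htotal : Fintype.card α * Fintype.card {π : Equiv.Perm α // π x = y}
      = (Fintype.card α).factorial := by
    rw [← Fintype.card_perm,
      Fintype.card_congr (Equiv.sigmaFiberEquiv fun π : Equiv.Perm α => π x).symm,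
      Fintype.card_sigma]
    simp [hfiber]
  have hα : 0 < Fintype.card α := Fintype.card_pos_iff.mpr ⟨x⟩
  rw [← Nat.mul_factorial_pred hα.ne'] at htotal
  exact Nat.eq_of_mul_eq_mul_left hα htotal

theorem Sym.card_filter_forall_mem {α : Type*} [Fintype α] [DecidableEq α] (p : α → Prop)
    [DecidablePred p] (m : ℕ)
    [DecidablePred fun M : Sym α m => ∀ x ∈ (M : Multiset α), p x] :
    #{M : Sym α m | ∀ x ∈ (M : Multiset α), p x}
      = (Fintype.card {x // p x} + m - 1).choose m := by
  have hlift : ({M : Sym α m | ∀ x ∈ (M : Multiset α), p x} : Finset (Sym α m))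
      = (univ : Finset (Sym {x // p x} m)).map
          ⟨Sym.map Subtype.val, Sym.map_injective Subtype.val_injective m⟩ := by
    ext M
    simp only [mem_filter, mem_univ, true_and, Finset.mem_map, Function.Embedding.coeFn_mk]
    constructor
    · intro h
      refine ⟨M.attach.map fun x => ⟨x.1, h x.1 x.2⟩, ?_⟩
      rw [Sym.map_map]
      exact M.attach_map_coe
    · rintro ⟨t, rfl⟩ x hx
      obtain ⟨y, -, rfl⟩ := Multiset.mem_map.mp hx
      exact y.2
  rw [hlift, card_map, card_univ, Sym.card_sym_eq_choose]

theorem sum_card_filter_forall_mem_sym {α β : Type*} [Fintype α] [Fintype β] [DecidableEq β]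
    (r : α → β → Prop) [∀ a b, Decidable (r a b)] {k : ℕ}
    (hk : ∀ a, Fintype.card {b // r a b} = k) (m : ℕ)
    [∀ M : Sym β m, DecidablePred fun a => ∀ b ∈ (M : Multiset β), r a b] :
    ∑ M : Sym β m, #{a | ∀ b ∈ (M : Multiset β), r a b}
      = Fintype.card α * (k + m - 1).choose m := by
  calc ∑ M : Sym β m, #{a | ∀ b ∈ (M : Multiset β), r a b}
      = ∑ a : α, #{M : Sym β m | ∀ b ∈ (M : Multiset β), r a b} :=
        sum_card_bipartiteAbove_eq_sum_card_bipartiteBelow _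
    _ = Fintype.card α * (k + m - 1).choose m := by
        simp_rw [Sym.card_filter_forall_mem, hk, sum_const, card_univ, smul_eq_mul]

theorem Multiset.exists_rightInverse_map_eq_of_map_eq_univ {β γ : Type*} [Fintype γ]
    {s : Multiset β} {g : β → γ} (h : s.map g = univ.val) :
    ∃ f : γ → β, (∀ c, g (f c) = c) ∧ univ.val.map f = s := by
  have hex (c : γ) : ∃ b ∈ s, g b = c := Multiset.mem_map.mp (h ▸ mem_univ_val c)
  choose f hfs hgf using hex
  have hinj := Multiset.inj_on_of_nodup_map (h ▸ univ.nodup)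
  refine ⟨f, hgf, ?_⟩
  calc univ.val.map f = (s.map g).map f := by rw [h]
    _ = s := by
      rw [Multiset.map_map]
      exact (Multiset.map_congr rfl fun b hb => hinj _ (hfs _) _ hb (hgf _)).trans s.map_id'

section LatinHypercube

variable {n d : ℕ} (z : Fin d)

def lhPoint (σ : {i : Fin d // i ≠ z} → Equiv.Perm (Fin n)) (k : Fin n) : Fin d → Fin n :=
  fun i => if h : i = z then k else σ ⟨i, h⟩ k

@[simp]
theorem lhPoint_self (σ : {i : Fin d // i ≠ z} → Equiv.Perm (Fin n)) (k : Fin n) :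
    lhPoint z σ k z = k :=
  dif_pos rfl

theorem lhPoint_of_ne (σ : {i : Fin d // i ≠ z} → Equiv.Perm (Fin n)) (k : Fin n) {i : Fin d}
    (h : i ≠ z) : lhPoint z σ k i = σ ⟨i, h⟩ k :=
  dif_neg h

def lhTrialOfPerms (σ : {i : Fin d // i ≠ z} → Equiv.Perm (Fin n)) : LHT n d :=
  ⟨⟨univ.val.map (lhPoint z σ), by simp⟩, fun i => by
    rw [Sym.coe_mk, Multiset.map_map]
    by_cases h : i = z
    · subst h
      simp
    · simp [lhPoint_of_ne z _ _ h]⟩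

theorem mem_lhTrialOfPerms {σ : {i : Fin d // i ≠ z} → Equiv.Perm (Fin n)}
    {a : Fin d → Fin n} :
    a ∈ ((lhTrialOfPerms z σ).1 : Multiset (Fin d → Fin n)) ↔ ∀ i, σ i (a z) = a i := by
  simp only [lhTrialOfPerms, Sym.coe_mk, Multiset.mem_map, mem_univ_val, true_and]
  constructor
  · rintro ⟨k, rfl⟩ i
    rw [lhPoint_self, lhPoint_of_ne z σ k i.2]
  · intro ha
    refine ⟨a z, funext fun i => ?_⟩
    by_cases h : i = z
    · subst h
      exact lhPoint_self i σ _
    · rw [lhPoint_of_ne z σ _ h, ha ⟨i, h⟩]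

theorem lhTrialOfPerms_injective : Function.Injective (lhTrialOfPerms (n := n) z) := by
  intro σ σ' h
  funext i
  refine Equiv.ext fun k => ?_
  have hk : lhPoint z σ k ∈ ((lhTrialOfPerms z σ').1 : Multiset (Fin d → Fin n)) :=
    h ▸ Multiset.mem_map_of_mem _ (mem_univ_val k)
  simpa [lhPoint_of_ne z σ k i.2] using ((mem_lhTrialOfPerms z).mp hk i).symm

theorem lhTrialOfPerms_surjective : Function.Surjective (lhTrialOfPerms (n := n) z) := by
  rintro ⟨H, hH⟩
  obtain ⟨f, hfz, hf⟩ := Multiset.exists_rightInverse_map_eq_of_map_eq_univ (hH z)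
  have hbij (i : Fin d) : Function.Bijective fun k => f k i := by
    have hi := hH i
    rw [← hf, Multiset.map_map] at hi
    exact (Multiset.bijective_iff_map_univ_eq_univ _).mpr hi
  refine ⟨fun i => Equiv.ofBijective _ (hbij i.1), Subtype.ext (Sym.coe_injective ?_)⟩
  change univ.val.map (lhPoint z _) = (H : Multiset (Fin d → Fin n))
  rw [← hf]
  refine Multiset.map_congr rfl fun k _ => funext fun (i : Fin d) => ?_
  by_cases h : i = z
  · subst h
    rw [lhPoint_self, hfz]
  · rw [lhPoint_of_ne z _ k h]
    rfl

noncomputable def lhTrialEquiv : ({i : Fin d // i ≠ z} → Equiv.Perm (Fin n)) ≃ LHT n d :=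
  Equiv.ofBijective _ ⟨lhTrialOfPerms_injective z, lhTrialOfPerms_surjective z⟩

theorem card_LHT (hd : 0 < d) : Fintype.card (LHT n d) = n.factorial ^ (d - 1) := by
  rw [← Fintype.card_congr (lhTrialEquiv ⟨0, hd⟩), Fintype.card_fun, Fintype.card_perm]
  simp

theorem card_LHT_mem (hd : 0 < d) (a : Fin d → Fin n) :
    Fintype.card {H : LHT n d // a ∈ (H.1 : Multiset (Fin d → Fin n))}
      = (n - 1).factorial ^ (d - 1) := by
  let z : Fin d := ⟨0, hd⟩
  let e : {H : LHT n d // a ∈ (H.1 : Multiset (Fin d → Fin n))}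
      ≃ ∀ i : {i : Fin d // i ≠ z}, {π : Equiv.Perm (Fin n) // π (a z) = a i} :=
    ((lhTrialEquiv z).subtypeEquiv fun _ => (mem_lhTrialOfPerms z).symm).symm.trans
      Equiv.subtypePiEquivPi
  rw [Fintype.card_congr e, Fintype.card_pi]
  simp [Equiv.Perm.card_subtype_apply_eq]

end LatinHypercube

theorem expected_intersection_LH_general (n d m : ℕ) (hd : 1 ≤ d) :
    (∑ M : Sym (LHT n d) m,
        ((Finset.univ.filter (fun a : Fin d → Fin n =>
          ∀ H ∈ (M : Multiset (LHT n d)),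
            a ∈ ((H : LHT n d).1 : Multiset (Fin d → Fin n)))).card : ℚ))
      / (Fintype.card (Sym (LHT n d) m) : ℚ)
    = (n : ℚ) ^ d * (((n - 1).factorial ^ (d - 1) + m - 1).choose m : ℚ)
        / ((n.factorial ^ (d - 1) + m - 1).choose m : ℚ) := by
  rw [← Nat.cast_sum, sum_card_filter_forall_mem_sym _ (card_LHT_mem hd) m,
    Sym.card_sym_eq_choose, card_LHT hd]
  simp

/-- the expected number of `d`-tuples in `[n]^d` common to all trials
of a uniformly random multiset of `m` Latin Hypercube `d`-trials on `[n]` equals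
`n^d · C(((n-1)!)^(d-1)+m-1, m) / C((n!)^(d-1)+m-1, m)`. -/
theorem expected_intersection_LH (n d m : ℕ) (hn : 1 ≤ n) (hd : 1 ≤ d) (hm : 1 ≤ m) :
    (∑ M : Sym (LHT n d) m,
        ((Finset.univ.filter (fun a : Fin d → Fin n =>
          ∀ H ∈ (M : Multiset (LHT n d)),
            a ∈ ((H : LHT n d).1 : Multiset (Fin d → Fin n)))).card : ℚ))
      / (Fintype.card (Sym (LHT n d) m) : ℚ)
    = (n : ℚ) ^ d * (((n - 1).factorial ^ (d - 1) + m - 1).choose m : ℚ)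
        / ((n.factorial ^ (d - 1) + m - 1).choose m : ℚ) :=
  expected_intersection_LH_general n d m hd
end

section
/- A fixed d-tuple ((p_1,x_1),...,(p_d,x_d)) is contained in exactly p^(d(d-1)(p-1)) · ((p^(d-1)-1)!)^(dp) Orthogonal d-trials on [p]×[p^(d-1)]. -/
/-- Points of the `d`-dimensional parameter space on `n = p^d` values, each value
written as a pair in `[p] × [p^(d-1)]`. -/
abbrev OPoint (p d : ℕ) := Fin d → Fin p × Fin (p ^ (d - 1))

/-- An Orthogonal `d`-trial on `[p] × [p^(d-1)]`: a Latin Hypercube `d`-trial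
(each of the `d` coordinate projections of the multiset of `p^d` rows is a
permutation of the `p^d` values) such that every `(p_1,…,p_d) ∈ [p]^d` occurs
exactly once as the tuple of first components of a row. -/
def IsOrthTrial {p d : ℕ} (H : Sym (OPoint p d) (p ^ d)) : Prop :=
  (∀ i : Fin d, (H : Multiset (OPoint p d)).map (fun r => r i)
      = (Finset.univ : Finset (Fin p × Fin (p ^ (d - 1)))).val) ∧
  (H : Multiset (OPoint p d)).map (fun r => fun i => (r i).1)
      = (Finset.univ : Finset (Fin d → Fin p)).val

instance {p d : ℕ} : DecidablePred (IsOrthTrial (p := p) (d := d)) := fun H => by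
  unfold IsOrthTrial; infer_instance

/-- The finset of all Orthogonal `d`-trials on `[p] × [p^(d-1)]`. -/
def OrthTrial (p d : ℕ) : Finset (Sym (OPoint p d) (p ^ d)) :=
  Finset.univ.filter IsOrthTrial

/-!
An orthogonal trial on `[p] × [N]`, `N = p^(d-1)`, is the same thing as a choice, for every
coordinate `i` and every first component `v ∈ [p]`, of a bijection `E i v` from the `N` tuples
`q ∈ [p]^d` with `q i = v` onto `[N]`: the row with first components `q` is
`i ↦ (q i, E i (q i) q)`. The trial contains `a` exactly when each of the `d` bijections
`E i (a i).1` sends the first components of `a` to `(a i).2`, which leaves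
`((N - 1)! * N! ^ (p - 1)) ^ d` trials; since `N! = N * (N - 1)!` this is the stated number.
-/

open Finset Function
open scoped Nat

namespace Fintype

variable {α β ι : Type*} [Fintype ι] [DecidableEq ι]

theorem card_subtype_equiv_apply_eq [Fintype α] [Fintype β] [DecidableEq α] [DecidableEq β]
    (h : card α = card β) (x : α) (y : β) :
    card {e : α ≃ β // e x = y} = (card α - 1)! := by
  have hcompl : card {a // a ≠ x} = card {b // b ≠ y} := by
    rw [card_subtype_compl, card_subtype_compl, card_subtype_eq, card_subtype_eq, h]
  -- such `e` are exactly the bijections `{a // a ≠ x} ≃ {b // b ≠ y}` extended by `x ↦ y`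
  rw [card_congr ((Equiv.subtypeEquiv (Equiv.equivCongr (Equiv.optionSubtypeNe x).symm
      (Equiv.refl β)) fun e => by simp).trans (Equiv.optionSubtype y)),
    card_equiv (equivOfCardEq hcompl), card_subtype_compl, card_subtype_eq]

theorem card_subtype_pi_eval {T : ι → Type*} [∀ i, Fintype (T i)] (i₀ : ι) (P : T i₀ → Prop)
    [DecidablePred P] :
    card {g : ∀ i, T i // P (g i₀)} = card {t // P t} * ∏ i : {i // i ≠ i₀}, card (T i) := by
  have e : {g : ∀ i, T i // P (g i₀)} ≃ {t // P t} × ∀ i : {i // i ≠ i₀}, T i :=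
    (Equiv.subtypeEquiv (Equiv.piSplitAt i₀ T) fun _ => Iff.rfl).trans
      Equiv.prodSubtypeFstEquivSubtypeProd
  rw [card_congr e, card_prod, card_pi]

theorem card_subtype_apply_eq [Fintype β] [DecidableEq β] (i : ι) (b : β) :
    card {q : ι → β // q i = b} = card β ^ (card ι - 1) := by
  rw [card_subtype_pi_eval (T := fun _ => β) i (· = b), card_subtype_eq, prod_const,
    Finset.card_univ, card_subtype_compl, card_subtype_eq, one_mul]

end Fintype

theorem Multiset.exists_eq_map_univ_val_of_map_eq_univ_val {α β : Type*} [Fintype β]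
    {M : Multiset α} {g : α → β} (h : M.map g = univ.val) :
    ∃ f : β → α, (∀ b, g (f b) = b) ∧ M = univ.val.map f := by
  classical
  let T : Finset α := ⟨M, .of_map g (h ▸ univ.nodup)⟩
  have hT : (univ : Finset T).val.map Subtype.val = M := by
    rw [univ_eq_attach, attach_val, Multiset.attach_map_val]
  have hbij : Bijective fun x : T => g x := by
    rw [Multiset.bijective_iff_map_univ_eq_univ, ← h, ← hT, Multiset.map_map]; rfl
  let e := Equiv.ofBijective _ hbij
  refine ⟨fun b => (e.symm b).1, e.apply_symm_apply, ?_⟩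
  rw [← hT, ← Multiset.map_univ_val_equiv e.symm, Multiset.map_map]
  rfl

theorem pred_factorial_mul_factorial_pow_pow (p d : ℕ) :
    ((p ^ (d - 1) - 1)! * (p ^ (d - 1))! ^ (p - 1)) ^ d
      = p ^ (d * (d - 1) * (p - 1)) * (p ^ (d - 1) - 1)! ^ (d * p) := by
  rcases p.eq_zero_or_pos with rfl | hp
  · have : 0 ^ (d - 1) - 1 = 0 := by have := zero_pow_le_one (M₀ := ℕ) (d - 1); omega
    simp [this]
  · obtain ⟨p, rfl⟩ := Nat.exists_eq_add_of_lt hp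
    rw [← Nat.mul_factorial_pred (pow_pos hp _).ne']
    simp only [zero_add, Nat.add_sub_cancel]
    ring

abbrev Fiber (p d : ℕ) (i : Fin d) (v : Fin p) : Type := {q : Fin d → Fin p // q i = v}

theorem card_fiber (p d : ℕ) (i : Fin d) (v : Fin p) :
    Fintype.card (Fiber p d i v) = p ^ (d - 1) := by
  simp [Fintype.card_subtype_apply_eq]

abbrev FiberLabeling (p d : ℕ) : Type := ∀ i v, Fiber p d i v ≃ Fin (p ^ (d - 1))

namespace FiberLabeling

variable {p d : ℕ}

def coordEquiv (E : FiberLabeling p d) (i : Fin d) :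
    (Fin d → Fin p) ≃ Fin p × Fin (p ^ (d - 1)) :=
  (Equiv.sigmaFiberEquiv fun q : Fin d → Fin p => q i).symm.trans
    ((Equiv.sigmaCongrRight (E i)).trans (Equiv.sigmaEquivProd _ _))

theorem coordEquiv_apply (E : FiberLabeling p d) (i : Fin d) (q : Fin d → Fin p) :
    E.coordEquiv i q = (q i, E i (q i) ⟨q, rfl⟩) := rfl

def row (E : FiberLabeling p d) (q : Fin d → Fin p) : OPoint p d := fun i => E.coordEquiv i q

def trial (E : FiberLabeling p d) : Sym (OPoint p d) (p ^ d) :=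
  ⟨univ.val.map E.row, by simp⟩

theorem coe_trial (E : FiberLabeling p d) :
    (E.trial : Multiset (OPoint p d)) = univ.val.map E.row := rfl

theorem isOrthTrial_trial (E : FiberLabeling p d) : IsOrthTrial E.trial := by
  refine ⟨fun i => ?_, ?_⟩
  · rw [coe_trial, Multiset.map_map]
    exact Multiset.map_univ_val_equiv (E.coordEquiv i)
  · rw [coe_trial, Multiset.map_map]
    exact Multiset.map_id _

theorem trial_injective : Injective (trial : FiberLabeling p d → _) := by
  intro E E' h
  have hrow : E.row = E'.row := by
    funext q
    have hmem : E.row q ∈ univ.val.map E'.row := by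
      rw [← coe_trial, ← h]; exact Multiset.mem_map_of_mem E.row (mem_univ q)
    obtain ⟨q', -, hq'⟩ := Multiset.mem_map.mp hmem
    obtain rfl : q' = q := congrArg (fun r i => (r i).1) hq'
    exact hq'.symm
  funext i v
  ext ⟨q, rfl⟩ : 1
  exact congrArg (fun r => (r i).2) (congrFun hrow q)

theorem exists_trial_eq {H : Sym (OPoint p d) (p ^ d)} (hH : IsOrthTrial H) :
    ∃ E : FiberLabeling p d, E.trial = H := by
  obtain ⟨hcoord, hfst⟩ := hH
  obtain ⟨f, hf, hH⟩ := Multiset.exists_eq_map_univ_val_of_map_eq_univ_val hfst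
  have hf_fst (q : Fin d → Fin p) (i : Fin d) : (f q i).1 = q i := congrFun (hf q) i
  have hbij (i : Fin d) : Bijective fun q => f q i := by
    rw [Multiset.bijective_iff_map_univ_eq_univ, ← hcoord i, hH, Multiset.map_map]; rfl
  have hfiber (i : Fin d) (v : Fin p) : Bijective fun s : Fiber p d i v => (f s i).2 := by
    rw [Fintype.bijective_iff_injective_and_card, card_fiber, Fintype.card_fin]
    refine ⟨fun s t hst => Subtype.ext ((hbij i).1 (Prod.ext ?_ hst)), rfl⟩
    rw [hf_fst, hf_fst, s.2, t.2]
  let E : FiberLabeling p d := fun i v => Equiv.ofBijective _ (hfiber i v)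
  refine ⟨E, Sym.ext ?_⟩
  rw [coe_trial, hH]
  congr
  funext q i
  exact Prod.ext (hf_fst q i).symm rfl

theorem mem_trial_iff (E : FiberLabeling p d) (a : OPoint p d) :
    a ∈ (E.trial : Multiset (OPoint p d))
      ↔ ∀ i, E i (a i).1 ⟨fun j => (a j).1, rfl⟩ = (a i).2 := by
  have hrow : a ∈ (E.trial : Multiset (OPoint p d)) ↔ E.row (fun j => (a j).1) = a := by
    refine ⟨fun hmem => ?_, fun h => Multiset.mem_map.mpr ⟨_, mem_univ _, h⟩⟩
    obtain ⟨q, -, rfl⟩ := Multiset.mem_map.mp hmem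
    rfl
  rw [hrow, funext_iff]
  simp [row, coordEquiv_apply, Prod.ext_iff]

theorem card_subtype_mem_trial (a : OPoint p d) :
    Fintype.card {E : FiberLabeling p d // a ∈ (E.trial : Multiset (OPoint p d))}
      = ((p ^ (d - 1) - 1)! * (p ^ (d - 1))! ^ (p - 1)) ^ d := by
  have hlabels (i : Fin d) (v : Fin p) :
      Fintype.card (Fiber p d i v ≃ Fin (p ^ (d - 1))) = (p ^ (d - 1))! := by
    rw [Fintype.card_equiv (Fintype.equivFinOfCardEq (card_fiber p d i v)), card_fiber]
  have hcoord (i : Fin d) :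
      Fintype.card {g : ∀ v, Fiber p d i v ≃ Fin (p ^ (d - 1)) //
          g (a i).1 ⟨fun j => (a j).1, rfl⟩ = (a i).2}
        = (p ^ (d - 1) - 1)! * (p ^ (d - 1))! ^ (p - 1) := by
    refine (Fintype.card_subtype_pi_eval (T := fun v => Fiber p d i v ≃ _)
      (a i).1 fun e => e ⟨fun j => (a j).1, rfl⟩ = (a i).2).trans ?_
    simp only [hlabels]
    rw [Fintype.card_subtype_equiv_apply_eq (by simp [card_fiber]), card_fiber, prod_const,
      card_univ, Fintype.card_subtype_compl, Fintype.card_subtype_eq, Fintype.card_fin]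
  rw [Fintype.card_congr ((Equiv.subtypeEquivRight fun E : FiberLabeling p d =>
      E.mem_trial_iff a).trans (@Equiv.subtypePiEquivPi (Fin d)
        (fun i => ∀ v, Fiber p d i v ≃ Fin (p ^ (d - 1)))
        fun i g => g (a i).1 ⟨fun j => (a j).1, rfl⟩ = (a i).2)), Fintype.card_pi,
    prod_congr rfl fun i _ => hcoord i, prod_const, card_univ, Fintype.card_fin]

theorem card_filter_mem_orthTrial (a : OPoint p d) :
    #((OrthTrial p d).filter fun H : Sym (OPoint p d) (p ^ d) => a ∈ (H : Multiset (OPoint p d)))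
      = Fintype.card {E : FiberLabeling p d // a ∈ (E.trial : Multiset (OPoint p d))} := by
  classical
  have horth : OrthTrial p d = univ.map ⟨trial, trial_injective⟩ := by
    ext H
    simp only [OrthTrial, mem_filter, mem_univ, true_and, mem_map, Embedding.coeFn_mk]
    exact ⟨exists_trial_eq, by rintro ⟨E, -, rfl⟩; exact E.isOrthTrial_trial⟩
  rw [horth, filter_map, card_map, Fintype.card_subtype]
  rfl

end FiberLabeling

theorem number_of_orthogonal_trials_containing_tuple_general (p d : ℕ) (a : OPoint p d) :
    ((OrthTrial p d).filter (fun H : Sym (OPoint p d) (p ^ d) =>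
        a ∈ (H : Multiset (OPoint p d)))).card
      = p ^ (d * (d - 1) * (p - 1)) * (p ^ (d - 1) - 1).factorial ^ (d * p) := by
  rw [FiberLabeling.card_filter_mem_orthTrial, FiberLabeling.card_subtype_mem_trial,
    pred_factorial_mul_factorial_pow_pow]

/-- a fixed `d`-tuple `((p_1,x_1),…,(p_d,x_d))` is contained in exactly
`p^(d(d-1)(p-1)) · ((p^(d-1)-1)!)^(dp)` Orthogonal `d`-trials on `[p] × [p^(d-1)]`. -/
theorem number_of_orthogonal_trials_containing_tuple (p d : ℕ) (hp : 1 ≤ p) (hd : 1 ≤ d)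
    (a : OPoint p d) :
    ((OrthTrial p d).filter (fun H : Sym (OPoint p d) (p ^ d) =>
        a ∈ (H : Multiset (OPoint p d)))).card
      = p ^ (d * (d - 1) * (p - 1)) * (p ^ (d - 1) - 1).factorial ^ (d * p) :=
  number_of_orthogonal_trials_containing_tuple_general p d a
end

section
/- The expected total number of edges (over all coordinate pairs 1 ≤ i < j ≤ d) common to all members of a uniformly random multiset of m Latin Hypercube d-trials on [n] equals n² · binomial(d,2) · binomial((n-1)!·(n!)^(d-2) + m - 1, m) / binomial((n!)^(d-1) + m - 1, m). -/
/-!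
By linearity, the total is the sum over edges `e = (i, j, a, b)` with `i < j` of the number of
multisets all of whose members contain `e`, i.e. of multisets of size `m` drawn from the trials
containing `e`; from `K` objects there are `C(K + m - 1, m)` of these. Listing the rows of a
trial by their `i`-th coordinate identifies the trials with the `(d - 1)`-tuples of permutations
of `[n]` giving the other coordinates. Hence there are `(n!)^(d-1)` trials, and the ones
containing `(i, j, a, b)` are those whose `j`-th permutation sends `a` to `b`:
`(n-1)! · (n!)^(d-2)` of them.
-/

open Finset Nat

variable {α β ι : Type*}

theorem Equiv.Perm.card_subtype_apply_eq_s8 [Fintype α] [DecidableEq α] (a b : α) :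
    Fintype.card {τ : Equiv.Perm α // τ a = b} = (Fintype.card α - 1)! := by
  have swapLeft : {τ : Equiv.Perm α // τ a = b} ≃ {τ : Equiv.Perm α // τ a = a} :=
    (Equiv.mulLeft (Equiv.swap a b)).subtypeEquiv fun τ => by
      simp [Equiv.swap_apply_eq_iff]
  have fixing : Equiv.Perm {x // x ≠ a} ≃ {τ : Equiv.Perm α // τ a = a} :=
    (Equiv.Perm.subtypeEquivSubtypePerm _).trans (Equiv.subtypeEquivRight fun τ => by simp)
  rw [Fintype.card_congr (swapLeft.trans fixing.symm), Fintype.card_perm]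
  simp [Fintype.card_subtype_compl]

theorem Fintype.card_subtype_fun_apply [Fintype ι] [DecidableEq ι] [Fintype β] (j : ι)
    (p : β → Prop) [DecidablePred p] :
    Fintype.card {f : ι → β // p (f j)}
      = Fintype.card {b // p b} * Fintype.card β ^ (Fintype.card ι - 1) := by
  have split : {f : ι → β // p (f j)} ≃ {b // p b} × ({k // k ≠ j} → β) :=
    ((Equiv.funSplitAt j β).subtypeEquiv fun f => Iff.rfl).trans
      Equiv.prodSubtypeFstEquivSubtypeProd
  rw [Fintype.card_congr split, Fintype.card_prod, Fintype.card_fun]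
  simp [Fintype.card_subtype_compl]

theorem Multiset.exists_eq_map_univ_of_map_eq_univ [Fintype β] {s : Multiset α} {f : α → β}
    (h : s.map f = univ.val) : ∃ g : β → α, (∀ b, f (g b) = b) ∧ s = univ.val.map g := by
  have hmem : ∀ b, ∃ r ∈ s, f r = b := fun b => Multiset.mem_map.1 (h ▸ Finset.mem_univ b)
  choose g hgs hfg using hmem
  have hinj := Multiset.inj_on_of_nodup_map (h ▸ univ.nodup)
  refine ⟨g, hfg, ?_⟩
  calc s = s.map (g ∘ f) := by
        conv_lhs => rw [← Multiset.map_id s]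
        exact Multiset.map_congr rfl fun r hr => (hinj _ (hgs _) _ hr (hfg _)).symm
    _ = univ.val.map g := by rw [← Multiset.map_map, h]

theorem Function.bijective_of_map_univ_val_eq [Fintype α] {f : α → α}
    (h : univ.val.map f = univ.val) : Function.Bijective f :=
  Finite.injective_iff_bijective.1 fun x y hxy =>
    Multiset.inj_on_of_nodup_map (by rw [h]; exact univ.nodup) x (mem_univ x) y (mem_univ y) hxy

theorem Sym.card_subtype_forall_mem [Fintype α] [DecidableEq α] (p : α → Prop)
    [DecidablePred p] (m : ℕ) :
    Fintype.card {M : Sym α m // ∀ a ∈ (M : Multiset α), p a}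
      = (Fintype.card {a // p a} + m - 1).choose m := by
  rw [← Sym.card_sym_eq_choose]
  refine (Fintype.card_congr (Equiv.ofBijective
    (fun M : Sym {a // p a} m => ⟨M.map Subtype.val, by
      simp only [Sym.coe_map, Multiset.mem_map]
      rintro _ ⟨b, -, rfl⟩
      exact b.2⟩) ⟨?_, ?_⟩)).symm
  · intro M M' h
    exact Sym.map_injective Subtype.val_injective m (congrArg Subtype.val h)
  · rintro ⟨⟨M, hcard⟩, hM⟩
    lift M to Multiset {a // p a} using hM
    exact ⟨⟨M, by simpa using hcard⟩, rfl⟩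

theorem Sym.sum_card_filter_forall_mem [Fintype α] [DecidableEq α] (m : ℕ) (s : Finset β)
    (R : β → α → Prop) [∀ e, DecidablePred (R e)] :
    ∑ M : Sym α m, #{e ∈ s | ∀ a ∈ (M : Multiset α), R e a}
      = ∑ e ∈ s, (Fintype.card {a // R e a} + m - 1).choose m := by
  refine (sum_card_bipartiteAbove_eq_sum_card_bipartiteBelow
    (r := fun (M : Sym α m) e => ∀ a ∈ (M : Multiset α), R e a)).trans
      (sum_congr rfl fun e _ => ?_)
  rw [← Sym.card_subtype_forall_mem, Fintype.card_subtype]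
  rfl

theorem Finset.card_product_filter_fst_lt [Fintype α] [LinearOrder α] [Fintype β] :
    #{e : (α × α) × β | e.1.1 < e.1.2} = (Fintype.card α).choose 2 * Fintype.card β := by
  rw [← univ_product_univ, filter_product_left fun x : α × α => x.1 < x.2, card_product,
    ← univ_product_univ, card_product_filter_lt, Finset.card_univ, Finset.card_univ]

namespace LHT

variable {n d : ℕ}

def row (i : Fin d) (σ : {k // k ≠ i} → Equiv.Perm (Fin n)) (a : Fin n) : Fin d → Fin n :=
  fun k => if h : k = i then a else σ ⟨k, h⟩ a

def ofPerms (i : Fin d) (σ : {k // k ≠ i} → Equiv.Perm (Fin n)) : LHT n d :=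
  ⟨⟨univ.val.map (row i σ), by simp⟩, fun k => by
    change (univ.val.map (row i σ)).map (· k) = univ.val
    rw [Multiset.map_map]
    by_cases hk : k = i
    · subst hk
      simp [Function.comp_def, row]
    · simp [Function.comp_def, row, hk]⟩

@[simp]
theorem row_apply_self (i : Fin d) (σ : {k // k ≠ i} → Equiv.Perm (Fin n)) (a : Fin n) :
    row i σ a i = a :=
  dif_pos rfl

theorem row_apply_of_ne {i k : Fin d} (hk : k ≠ i) (σ : {k // k ≠ i} → Equiv.Perm (Fin n))
    (a : Fin n) : row i σ a k = σ ⟨k, hk⟩ a :=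
  dif_neg hk

theorem coe_ofPerms (i : Fin d) (σ : {k // k ≠ i} → Equiv.Perm (Fin n)) :
    ((ofPerms i σ).1 : Multiset (Fin d → Fin n)) = univ.val.map (row i σ) :=
  rfl

theorem mem_ofPerms {i : Fin d} {σ : {k // k ≠ i} → Equiv.Perm (Fin n)} {r : Fin d → Fin n} :
    r ∈ ((ofPerms i σ).1 : Multiset (Fin d → Fin n)) ↔ r = row i σ (r i) := by
  rw [coe_ofPerms]
  refine ⟨fun hr => ?_, fun hr => Multiset.mem_map.2 ⟨r i, mem_univ_val _, hr.symm⟩⟩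
  obtain ⟨a, -, rfl⟩ := Multiset.mem_map.1 hr
  rw [row_apply_self]

theorem ofPerms_injective (i : Fin d) : Function.Injective (ofPerms (n := n) i) := by
  intro σ τ h
  funext ⟨k, hk⟩
  refine Equiv.ext fun a => ?_
  have hrow : row i σ a ∈ ((ofPerms i τ).1 : Multiset (Fin d → Fin n)) :=
    h ▸ Multiset.mem_map.2 ⟨a, mem_univ_val _, rfl⟩
  have := congrFun (mem_ofPerms.1 hrow) k
  rwa [row_apply_self, row_apply_of_ne hk, row_apply_of_ne hk] at this

theorem ofPerms_surjective (i : Fin d) : Function.Surjective (ofPerms (n := n) i) := by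
  rintro ⟨⟨T, _⟩, hT⟩
  obtain ⟨g, hgi, rfl⟩ := Multiset.exists_eq_map_univ_of_map_eq_univ (hT i)
  have hbij (k : Fin d) : Function.Bijective fun a => g a k :=
    Function.bijective_of_map_univ_val_eq
      ((Multiset.map_map (fun r : Fin d → Fin n => r k) g univ.val).symm.trans (hT k))
  refine ⟨fun k => Equiv.ofBijective _ (hbij k), Subtype.ext (Subtype.ext ?_)⟩
  change univ.val.map (row i _) = univ.val.map g
  congr 1
  funext a k
  by_cases hk : k = i
  · subst hk
    simp [row, hgi]
  · simp [row, hk]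

noncomputable def equivPerms (i : Fin d) : ({k // k ≠ i} → Equiv.Perm (Fin n)) ≃ LHT n d :=
  Equiv.ofBijective _ ⟨ofPerms_injective i, ofPerms_surjective i⟩

theorem card_eq (n d : ℕ) : Fintype.card (LHT n d) = n ! ^ (d - 1) := by
  rcases d with _ | d
  · exact Fintype.card_eq_one_iff.2
      ⟨⟨default, fun i => i.elim0⟩, fun H => Subtype.ext (Subsingleton.elim _ _)⟩
  · rw [← Fintype.card_congr (equivPerms 0), Fintype.card_fun, Fintype.card_perm]
    simp [Fintype.card_subtype_compl]

def HasEdge (H : LHT n d) (i j : Fin d) (a b : Fin n) : Prop :=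
  ∃ r ∈ (H.1 : Multiset (Fin d → Fin n)), r i = a ∧ r j = b

instance (H : LHT n d) (i j : Fin d) (a b : Fin n) : Decidable (H.HasEdge i j a b) :=
  inferInstanceAs (Decidable (∃ r ∈ _, _))

theorem ofPerms_hasEdge_iff {i j : Fin d} (hji : j ≠ i)
    (σ : {k // k ≠ i} → Equiv.Perm (Fin n)) (a b : Fin n) :
    (ofPerms i σ).HasEdge i j a b ↔ σ ⟨j, hji⟩ a = b := by
  refine ⟨?_, fun h =>
    ⟨row i σ a, Multiset.mem_map.2 ⟨a, mem_univ_val _, rfl⟩, row_apply_self .., ?_⟩⟩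
  · rintro ⟨r, hr, rfl, rfl⟩
    conv_rhs => rw [mem_ofPerms.1 hr]
    rw [row_apply_of_ne hji]
  · rwa [row_apply_of_ne hji]

theorem card_hasEdge {i j : Fin d} (hij : i ≠ j) (a b : Fin n) :
    Fintype.card {H : LHT n d // H.HasEdge i j a b} = (n - 1)! * n ! ^ (d - 2) := by
  rw [← Fintype.card_congr
      ((equivPerms i).subtypeEquiv fun σ => (ofPerms_hasEdge_iff hij.symm σ a b).symm),
    Fintype.card_subtype_fun_apply (⟨j, hij.symm⟩ : {k // k ≠ i})
      fun τ : Equiv.Perm (Fin n) => τ a = b,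
    Equiv.Perm.card_subtype_apply_eq_s8, Fintype.card_perm]
  simp [Fintype.card_subtype_compl, Nat.sub_sub]

end LHT

theorem expected_edge_intersection_LH_general (n d m : ℕ) :
    (∑ M : Sym (LHT n d) m,
        ((Finset.univ.filter (fun e : (Fin d × Fin d) × Fin n × Fin n =>
          e.1.1 < e.1.2 ∧ ∀ H ∈ (M : Multiset (LHT n d)),
            ∃ r ∈ ((H : LHT n d).1 : Multiset (Fin d → Fin n)),
              r e.1.1 = e.2.1 ∧ r e.1.2 = e.2.2)).card : ℚ))
      / (Fintype.card (Sym (LHT n d) m) : ℚ)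
    = (n : ℚ) ^ 2 * (d.choose 2 : ℚ)
        * (((n - 1).factorial * n.factorial ^ (d - 2) + m - 1).choose m : ℚ)
        / ((n.factorial ^ (d - 1) + m - 1).choose m : ℚ) := by
  have edgeCount : ∑ M : Sym (LHT n d) m, #{e : (Fin d × Fin d) × Fin n × Fin n |
      e.1.1 < e.1.2 ∧ ∀ H ∈ (M : Multiset (LHT n d)), H.HasEdge e.1.1 e.1.2 e.2.1 e.2.2}
      = n ^ 2 * d.choose 2 * ((n - 1)! * n ! ^ (d - 2) + m - 1).choose m := by
    simp_rw [← filter_filter]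
    rw [Sym.sum_card_filter_forall_mem, sum_congr rfl fun e he => by
      rw [LHT.card_hasEdge (mem_filter.1 he).2.ne], sum_const, smul_eq_mul,
      card_product_filter_fst_lt]
    simp only [Fintype.card_fin, Fintype.card_prod]
    ring
  rw [← Nat.cast_sum, Sym.card_sym_eq_choose, LHT.card_eq]
  erw [edgeCount]
  push_cast
  ring

/-- the expected total number of edges (over all coordinate pairs
`i < j`) common to all members of a uniformly random multiset of `m` Latin
Hypercube `d`-trials on `[n]` equals
`n² · C(d,2) · C((n-1)!·(n!)^(d-2)+m-1, m) / C((n!)^(d-1)+m-1, m)`.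
An edge is a datum `(i, j, a_i, a_j)` with `i < j`; it is contained in a trial
if some row of the trial has `i`-th coordinate `a_i` and `j`-th coordinate `a_j`. -/
theorem expected_edge_intersection_LH (n d m : ℕ) (hn : 1 ≤ n) (hd : 2 ≤ d) (hm : 1 ≤ m) :
    (∑ M : Sym (LHT n d) m,
        ((Finset.univ.filter (fun e : (Fin d × Fin d) × Fin n × Fin n =>
          e.1.1 < e.1.2 ∧ ∀ H ∈ (M : Multiset (LHT n d)),
            ∃ r ∈ ((H : LHT n d).1 : Multiset (Fin d → Fin n)),
              r e.1.1 = e.2.1 ∧ r e.1.2 = e.2.2)).card : ℚ))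
      / (Fintype.card (Sym (LHT n d) m) : ℚ)
    = (n : ℚ) ^ 2 * (d.choose 2 : ℚ)
        * (((n - 1).factorial * n.factorial ^ (d - 2) + m - 1).choose m : ℚ)
        / ((n.factorial ^ (d - 1) + m - 1).choose m : ℚ) :=
  expected_edge_intersection_LH_general n d m
end

section
/- For 0 < a ≤ b and integers 1 ≤ m ≤ k, (a/b)^m ≤ ∏_{i=0}^{m-1} (a+i)/(b+i) ≤ (a/b)^m · exp(k(k-1)/(2a)). -/
open Real Finset

/-! Adding the same `x ≥ 0` to numerator and denominator of `a / b ≤ 1` moves the ratio up, but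
by at most the factor `1 + x / a ≤ exp (x / a)`, since `(a + x) / (b + x) ≤ (a + x) / b`.
Multiplying over `x = 0, …, m - 1` gives the bounds, with `∑_{i < m} i ≤ k (k - 1) / 2`. -/

section AddDivAdd

variable {a b x : ℝ}

lemma div_le_add_div_add (ha : 0 < a) (hab : a ≤ b) (hx : 0 ≤ x) :
    a / b ≤ (a + x) / (b + x) := by
  rw [div_le_div_iff₀ (ha.trans_le hab) (by linarith)]
  nlinarith

lemma add_div_add_le_div_mul_exp (ha : 0 < a) (hab : a ≤ b) (hx : 0 ≤ x) :
    (a + x) / (b + x) ≤ a / b * exp (x / a) := by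
  have hb : 0 < b := ha.trans_le hab
  calc (a + x) / (b + x) ≤ (a + x) / b := div_le_div_of_nonneg_left (by linarith) hb (by linarith)
    _ = a / b * (x / a + 1) := by field_simp; ring
    _ ≤ a / b * exp (x / a) := by gcongr; exact add_one_le_exp _

end AddDivAdd

section Products

variable {ι : Type*} (s : Finset ι) {f : ι → ℝ} {a b : ℝ}

lemma pow_card_le_prod_add_div_add (ha : 0 < a) (hab : a ≤ b) (hf : ∀ i ∈ s, 0 ≤ f i) :
    (a / b) ^ #s ≤ ∏ i ∈ s, (a + f i) / (b + f i) := by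
  rw [← prod_const]
  exact prod_le_prod (fun _ _ => div_nonneg ha.le (ha.le.trans hab)) fun i hi => div_le_add_div_add ha hab (hf i hi)

lemma prod_add_div_add_le_pow_card_mul_exp (ha : 0 < a) (hab : a ≤ b) (hf : ∀ i ∈ s, 0 ≤ f i) :
    ∏ i ∈ s, (a + f i) / (b + f i) ≤ (a / b) ^ #s * exp ((∑ i ∈ s, f i) / a) := by
  have hb : 0 < b := ha.trans_le hab
  calc ∏ i ∈ s, (a + f i) / (b + f i) ≤ ∏ i ∈ s, a / b * exp (f i / a) :=
        prod_le_prod (fun i hi => div_nonneg (by linarith [hf i hi]) (by linarith [hf i hi]))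
          fun i hi => add_div_add_le_div_mul_exp ha hab (hf i hi)
    _ = (a / b) ^ #s * exp ((∑ i ∈ s, f i) / a) := by
        rw [prod_mul_distrib, prod_const, sum_div, exp_sum]

end Products

lemma sum_range_natCast (n : ℕ) : ∑ i ∈ range n, (i : ℝ) = n * (n - 1) / 2 := by
  induction n with
  | zero => simp
  | succ n ih => rw [sum_range_succ, ih]; push_cast; ring

lemma sum_range_natCast_le {m k : ℕ} (hmk : m ≤ k) :
    ∑ i ∈ range m, (i : ℝ) ≤ k * (k - 1) / 2 := by
  rw [← sum_range_natCast]
  exact sum_le_sum_of_subset_of_nonneg (range_subset_range.mpr hmk) fun _ _ _ => by positivity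

theorem product_ratio_bounds_general (a b : ℝ) (ha : 0 < a) (hab : a ≤ b)
    (m k : ℕ) (hmk : m ≤ k) :
    (a / b) ^ m ≤ ∏ i ∈ Finset.range m, (a + i) / (b + i) ∧
    ∏ i ∈ Finset.range m, (a + i) / (b + i)
      ≤ (a / b) ^ m * Real.exp (k * (k - 1) / (2 * a)) := by
  have hf : ∀ i ∈ range m, (0 : ℝ) ≤ i := fun _ _ => by positivity
  constructor
  · simpa using pow_card_le_prod_add_div_add (range m) ha hab hf
  · calc ∏ i ∈ range m, (a + i) / (b + i)
        ≤ (a / b) ^ m * exp ((∑ i ∈ range m, (i : ℝ)) / a) := by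
          simpa using prod_add_div_add_le_pow_card_mul_exp (range m) ha hab hf
      _ ≤ (a / b) ^ m * exp (k * (k - 1) / (2 * a)) := by
          have hb : 0 < b := ha.trans_le hab
          rw [← div_div]
          gcongr
          exact sum_range_natCast_le hmk

/-- for `0 < a ≤ b` and integers `1 ≤ m ≤ k`,
`(a/b)^m ≤ ∏_{i=0}^{m-1} (a+i)/(b+i) ≤ (a/b)^m · exp(k(k-1)/(2a))`. -/
theorem product_ratio_bounds (a b : ℝ) (ha : 0 < a) (hab : a ≤ b)
    (m k : ℕ) (hm : 1 ≤ m) (hmk : m ≤ k) :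
    (a / b) ^ m ≤ ∏ i ∈ Finset.range m, (a + i) / (b + i) ∧
    ∏ i ∈ Finset.range m, (a + i) / (b + i)
      ≤ (a / b) ^ m * Real.exp (k * (k - 1) / (2 * a)) :=
  product_ratio_bounds_general a b ha hab m k hmk
end

section
/- With a = ((p^(d-1)−1)!)^(dp) · p^(d(d-1)(p-1)) and b = ((p^(d-1))!)^(dp), the ratio a/b equals 1/p^(d(d-1)) = 1/n^(d-1) where n = p^d; in particular this equals the ratio ((n-1)!)^(d-1)/(n!)^(d-1) arising from Latin Hypercube sampling, so Orthogonal sampling and Latin Hypercube sampling have the same first-order coverage parameter λ = 1/n^(d-1). -/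
/-! Since `m! = m · (m-1)!`, a ratio `((m-1)!)^k / (m!)^k` collapses to `1 / m^k`. For
`m = p^(d-1)` and `k = dp` this is `1 / p^(d(d-1)p)`, of which the factor `p^(d(d-1)(p-1))`
cancels all but `1 / p^(d(d-1))`; for `m = n = p^d` and `k = d-1` it is `1 / n^(d-1)`. -/

theorem Nat.cast_factorial_pred_pow_div_cast_factorial_pow {K : Type*} [Field K] [CharZero K]
    {n : ℕ} (hn : n ≠ 0) (k : ℕ) :
    (((n - 1).factorial ^ k : ℕ) : K) / ((n.factorial ^ k : ℕ) : K) = 1 / (n : K) ^ k := by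
  rw [← Nat.mul_factorial_pred hn]
  have : ((n - 1).factorial : K) ≠ 0 := by exact_mod_cast (Nat.factorial_pos _).ne'
  push_cast
  rw [mul_pow]
  field_simp

theorem pow_mul_pred_div_pow_mul {K : Type*} [Field K] {x : K} (hx : x ≠ 0) (k : ℕ) {p : ℕ}
    (hp : p ≠ 0) : x ^ (k * (p - 1)) / x ^ (k * p) = 1 / x ^ k := by
  obtain ⟨q, rfl⟩ := Nat.exists_eq_succ_of_ne_zero hp
  rw [Nat.succ_sub_one, Nat.mul_succ, pow_add]
  field_simp

theorem orthogonal_and_LH_same_lambda_general (p d : ℕ) (hp : 1 ≤ p) :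
    (((p ^ (d - 1) - 1).factorial ^ (d * p) * p ^ (d * (d - 1) * (p - 1)) : ℕ) : ℚ)
        / (((p ^ (d - 1)).factorial ^ (d * p) : ℕ) : ℚ)
      = 1 / (p : ℚ) ^ (d * (d - 1)) ∧
    (1 : ℚ) / (p : ℚ) ^ (d * (d - 1)) = 1 / ((p : ℚ) ^ d) ^ (d - 1) ∧
    (1 : ℚ) / ((p : ℚ) ^ d) ^ (d - 1)
      = (((p ^ d - 1).factorial ^ (d - 1) : ℕ) : ℚ)
          / (((p ^ d).factorial ^ (d - 1) : ℕ) : ℚ) := by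
  have hp0 : p ≠ 0 := Nat.one_le_iff_ne_zero.mp hp
  have hpow : ∀ e, p ^ e ≠ 0 := fun e => pow_ne_zero e hp0
  refine ⟨?_, by rw [← pow_mul], ?_⟩
  · rw [Nat.cast_mul, mul_div_right_comm,
      Nat.cast_factorial_pred_pow_div_cast_factorial_pow (hpow _), Nat.cast_pow, ← pow_mul,
      show (d - 1) * (d * p) = d * (d - 1) * p by ring, Nat.cast_pow, one_div_mul_eq_div,
      pow_mul_pred_div_pow_mul (Nat.cast_ne_zero.mpr hp0 : (p : ℚ) ≠ 0) _ hp0]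
  · rw [Nat.cast_factorial_pred_pow_div_cast_factorial_pow (hpow d), Nat.cast_pow]

/-- with `a = ((p^(d-1)−1)!)^(dp) · p^(d(d-1)(p-1))` (the number of
Orthogonal `d`-trials containing a fixed tuple) and `b = ((p^(d-1))!)^(dp)` (the total
number of Orthogonal `d`-trials), the ratio `a/b` equals `1/p^(d(d-1)) = 1/n^(d-1)`
where `n = p^d`, and this coincides with the Latin Hypercube ratio
`((n-1)!)^(d-1)/(n!)^(d-1)`; so OS and LHS have the same parameter `λ = 1/n^(d-1)`. -/
theorem orthogonal_and_LH_same_lambda (p d : ℕ) (hp : 1 ≤ p) (hd : 1 ≤ d) :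
    (((p ^ (d - 1) - 1).factorial ^ (d * p) * p ^ (d * (d - 1) * (p - 1)) : ℕ) : ℚ)
        / (((p ^ (d - 1)).factorial ^ (d * p) : ℕ) : ℚ)
      = 1 / (p : ℚ) ^ (d * (d - 1)) ∧
    (1 : ℚ) / (p : ℚ) ^ (d * (d - 1)) = 1 / ((p : ℚ) ^ d) ^ (d - 1) ∧
    (1 : ℚ) / ((p : ℚ) ^ d) ^ (d - 1)
      = (((p ^ d - 1).factorial ^ (d - 1) : ℕ) : ℚ)
          / (((p ^ d).factorial ^ (d - 1) : ℕ) : ℚ) :=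
  orthogonal_and_LH_same_lambda_general p d hp
end
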